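/- arXiv:2501.09741 — 2 statements merged into one kernel-verified Lean document; each statement's English description precedes it below -/
import Mathlib

section
/- For positive integers m and j with j ≤ m−1, the alternating sum over ℓ from j to 2m of (−1)^ℓ · C(2m, ℓ) · Stirling1unsigned(ℓ, ℓ−j) equals 0, where Stirling1unsigned(ℓ, k) is the unsigned Stirling number of the first kind (the bracket [ℓ choose k]). -/
/-- Unsigned Stirling numbers of the first kind: number of permutations of `n`
elements with exactly `k` cycles. -/
def stirling1 : ℕ → ℕ → ℕ
  | 0, 0 => 1
  | 0, _ + 1 => 0
  | _ + 1, 0 => 0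
  | n + 1, k + 1 => n * stirling1 n (k + 1) + stirling1 n k

/-!
By the Stirling recurrence, `s_j ℓ := [ℓ, ℓ - j]` satisfies `Δ s_{j+1} ℓ = ℓ • s_j ℓ`, and
multiplying by `ℓ` raises the order of a forward difference that annihilates a sequence by one.
Starting from the constant `s_0 = 1`, induction gives `Δ^(2j+1) s_j = 0` (`s_j` is a polynomial of
degree `2j` in `ℓ`). As `2j < 2m`, the `2m`-th forward difference of `s_j` at `0`, which is the
alternating binomial sum, vanishes.
-/

open Finset Function
open scoped fwdDiff

section FwdDiff

variable {G : Type*} [AddCommGroup G]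

theorem fwdDiff_iter_eq_zero_of_le {f : ℕ → G} {n k : ℕ} (hf : (Δ_[1])^[n] f = 0) (hnk : n ≤ k) :
    (Δ_[1])^[k] f = 0 := by
  obtain ⟨r, rfl⟩ := Nat.exists_eq_add_of_le hnk
  rw [add_comm, iterate_add_apply, hf]
  exact iterate_fixed (fwdDiff_const 1 0) r

theorem fwdDiff_iter_succ_nsmul_eq_zero {f : ℕ → G} {n : ℕ} (hf : (Δ_[1])^[n] f = 0) :
    (Δ_[1])^[n + 1] (fun ℓ ↦ ℓ • f ℓ) = 0 := by
  induction n generalizing f with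
  | zero => simp_all [Pi.zero_def]
  | succ n ih =>
    have hleibniz : Δ_[1] (fun ℓ ↦ ℓ • f ℓ) = (fun ℓ ↦ ℓ • Δ_[1] f ℓ) + fun ℓ ↦ f (ℓ + 1) := by
      ext ℓ
      simp only [fwdDiff, Pi.add_apply, smul_sub, succ_nsmul]
      abel
    have hshift : (Δ_[1])^[n + 1] (fun ℓ ↦ f (ℓ + 1)) = 0 := by
      ext ℓ
      rw [fwdDiff_iter_comp_add, hf, Pi.zero_apply, Pi.zero_apply]
    rw [iterate_succ_apply, hleibniz, fwdDiff_iter_add, ih (by rwa [← iterate_succ_apply]), hshift,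
      add_zero]

end FwdDiff

theorem sum_range_neg_one_pow_mul_choose_mul_eq_zero {R : Type*} [CommRing R] {f : ℕ → R} {n : ℕ}
    (hf : (Δ_[1])^[n] f 0 = 0) :
    ∑ k ∈ range (n + 1), (-1 : R) ^ k * n.choose k * f k = 0 := by
  have hsign : ∀ k ∈ range (n + 1), (-1 : R) ^ k = (-1) ^ n * (-1) ^ (n - k) := fun k hk ↦ by
    rw [← pow_add, show n + (n - k) = k + 2 * (n - k) by grind, pow_add, pow_mul, neg_one_sq,
      one_pow, mul_one]
  have hshift : ∑ k ∈ range (n + 1), (-1 : R) ^ (n - k) * n.choose k * f k = 0 := by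
    simpa [fwdDiff_iter_eq_sum_shift, zsmul_eq_mul, mul_assoc] using hf
  calc ∑ k ∈ range (n + 1), (-1 : R) ^ k * n.choose k * f k
      = (-1) ^ n * ∑ k ∈ range (n + 1), (-1 : R) ^ (n - k) * n.choose k * f k := by
        rw [mul_sum]
        exact sum_congr rfl fun k hk ↦ by rw [hsign k hk, mul_assoc, mul_assoc, mul_assoc]
    _ = 0 := by rw [hshift, mul_zero]

theorem stirling1_succ_succ (n k : ℕ) :
    stirling1 (n + 1) (k + 1) = n * stirling1 n (k + 1) + stirling1 n k := rfl

theorem stirling1_succ_zero (n : ℕ) : stirling1 (n + 1) 0 = 0 := rfl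

theorem stirling1_eq_zero_of_lt {n k : ℕ} (h : n < k) : stirling1 n k = 0 := by
  induction n generalizing k with
  | zero => obtain ⟨k, rfl⟩ := Nat.exists_eq_add_of_lt h; rfl
  | succ n ih =>
    obtain ⟨k, rfl⟩ := Nat.exists_eq_add_of_lt (Nat.zero_lt_of_lt h)
    rw [zero_add, stirling1_succ_succ, ih (by omega), ih (by omega), mul_zero]

theorem stirling1_self (n : ℕ) : stirling1 n n = 1 := by
  induction n with
  | zero => rfl
  | succ n ih => rw [stirling1_succ_succ, stirling1_eq_zero_of_lt n.lt_succ_self, ih, mul_zero]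

/-- `ℓ ↦ stirling1 ℓ (ℓ - j)` as an integer sequence, set to `0` for `ℓ < j`, where the truncated
subtraction would otherwise produce `stirling1 0 0 = 1`. -/
def stirling1Diag (j ℓ : ℕ) : ℤ :=
  if ℓ < j then 0 else stirling1 ℓ (ℓ - j)

theorem stirling1Diag_zero : stirling1Diag 0 = fun _ ↦ 1 := by
  ext ℓ
  simp [stirling1Diag, stirling1_self]

theorem fwdDiff_stirling1Diag_succ (j : ℕ) :
    Δ_[1] (stirling1Diag (j + 1)) = fun ℓ ↦ ℓ • stirling1Diag j ℓ := by
  ext ℓ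
  simp only [fwdDiff, stirling1Diag]
  rcases lt_trichotomy ℓ j with h | rfl | h
  · simp [h, show ℓ < j + 1 by omega]
  · cases ℓ <;> simp [stirling1_succ_zero]
  · obtain ⟨n, rfl⟩ := Nat.exists_eq_add_of_lt h
    rw [show j + n + 1 + 1 - (j + 1) = n + 1 by omega, show j + n + 1 - (j + 1) = n by omega,
      show j + n + 1 - j = n + 1 by omega, stirling1_succ_succ]
    simp [show ¬ j + n + 1 < j by omega]

theorem fwdDiff_iter_stirling1Diag (j : ℕ) : (Δ_[1])^[2 * j + 1] (stirling1Diag j) = 0 := by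
  induction j with
  | zero => rw [stirling1Diag_zero, iterate_one, fwdDiff_const]; rfl
  | succ j ih =>
    rw [show 2 * (j + 1) + 1 = (2 * j + 1 + 1) + 1 by ring, iterate_succ_apply,
      fwdDiff_stirling1Diag_succ, fwdDiff_iter_succ_nsmul_eq_zero ih]

theorem stmt0_general (m j : ℕ) (hm : 0 < m) (hjm : j ≤ m - 1) :
    ∑ ℓ ∈ Finset.Icc j (2 * m),
      (-1 : ℤ) ^ ℓ * (Nat.choose (2 * m) ℓ : ℤ) * (stirling1 ℓ (ℓ - j) : ℤ) = 0 := by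
  have hvanish : (Δ_[1])^[2 * m] (stirling1Diag j) = 0 :=
    fwdDiff_iter_eq_zero_of_le (fwdDiff_iter_stirling1Diag j) (by omega)
  calc ∑ ℓ ∈ Icc j (2 * m), (-1 : ℤ) ^ ℓ * ((2 * m).choose ℓ : ℤ) * (stirling1 ℓ (ℓ - j) : ℤ)
      = ∑ ℓ ∈ Icc j (2 * m), (-1 : ℤ) ^ ℓ * ((2 * m).choose ℓ : ℤ) * stirling1Diag j ℓ :=
        sum_congr rfl fun ℓ hℓ ↦ by rw [stirling1Diag, if_neg (by grind)]
    _ = ∑ ℓ ∈ range (2 * m + 1), (-1 : ℤ) ^ ℓ * ((2 * m).choose ℓ : ℤ) * stirling1Diag j ℓ :=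
        sum_subset (fun ℓ hℓ ↦ by grind) fun ℓ _ hℓ ↦ by
          rw [stirling1Diag, if_pos (by grind), mul_zero]
    _ = 0 := sum_range_neg_one_pow_mul_choose_mul_eq_zero (congrFun hvanish 0)

theorem stmt0 (m j : ℕ) (hm : 0 < m) (hj : 0 < j) (hjm : j ≤ m - 1) :
    ∑ ℓ ∈ Finset.Icc j (2 * m),
      (-1 : ℤ) ^ ℓ * (Nat.choose (2 * m) ℓ : ℤ) * (stirling1 ℓ (ℓ - j) : ℤ) = 0 :=
  stmt0_general m j hm hjm
end

section
/- For every positive integer m, the alternating sum over ℓ from m to 2m of (−1)^ℓ · C(2m, ℓ) · Stirling1unsigned(ℓ, ℓ−m) equals (2m−1)!!, the double factorial of 2m−1. -/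
open Finset

theorem stirling1_eq_stirlingFirst : ∀ n k, stirling1 n k = Nat.stirlingFirst n k
  | 0, 0 | 0, _ + 1 | _ + 1, 0 => rfl
  | n + 1, k + 1 => by
    rw [stirling1, Nat.stirlingFirst_succ_succ, stirling1_eq_stirlingFirst n (k + 1),
      stirling1_eq_stirlingFirst n k]

/-- Second-order Eulerian numbers `⟨⟨m, k⟩⟩` (Concrete Mathematics, §6.2). -/
def eulerian2 : ℕ → ℕ → ℕ
  | 0, 0 => 1
  | 0, _ + 1 => 0
  | m + 1, 0 => eulerian2 m 0
  | m + 1, k + 1 => (k + 2) * eulerian2 m (k + 1) + (2 * m - k) * eulerian2 m k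

theorem eulerian2_eq_zero_of_lt : ∀ {m k : ℕ}, m < k → eulerian2 m k = 0
  | _, 0, h => absurd h (Nat.not_lt_zero _)
  | 0, _ + 1, _ => rfl
  | m + 1, k + 1, h => by
    rw [eulerian2, eulerian2_eq_zero_of_lt (by omega : m < k + 1),
      eulerian2_eq_zero_of_lt (by omega : m < k), mul_zero, mul_zero, add_zero]

theorem eulerian2_succ_self (m : ℕ) : eulerian2 (m + 1) (m + 1) = 0 := by
  induction m with
  | zero => rfl
  | succ m ih =>
    rw [eulerian2, ih, eulerian2_eq_zero_of_lt (by omega), mul_zero, mul_zero, add_zero]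

theorem sum_eulerian2_succ_mul (m : ℕ) (a : ℕ → ℕ) :
    ∑ k ∈ range (m + 2), eulerian2 (m + 1) k * a k =
      ∑ k ∈ range (m + 1), eulerian2 m k * ((k + 1) * a k + (2 * m - k) * a (k + 1)) := by
  have hshift : ∑ k ∈ range (m + 2), eulerian2 m k * ((k + 1) * a k) =
      ∑ k ∈ range (m + 1), (k + 2) * eulerian2 m (k + 1) * a (k + 1) + eulerian2 m 0 * a 0 := by
    rw [sum_range_succ']
    exact congr_arg₂ _ (sum_congr rfl fun k _ => by ring) (by ring)
  rw [sum_range_succ, eulerian2_eq_zero_of_lt (lt_add_one m), zero_mul, add_zero] at hshift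
  rw [sum_range_succ']
  simp only [eulerian2, mul_add, sum_add_distrib, hshift]
  rw [add_right_comm, ← sum_add_distrib]
  exact congr_arg₂ _ (sum_congr rfl fun k _ => by ring) rfl

theorem sum_eulerian2 (m : ℕ) :
    ∑ k ∈ range (m + 1), eulerian2 m k = (2 * m - 1).doubleFactorial := by
  induction m with
  | zero => rfl
  | succ m ih =>
    calc ∑ k ∈ range (m + 2), eulerian2 (m + 1) k
        = ∑ k ∈ range (m + 1), eulerian2 m k * ((k + 1) * 1 + (2 * m - k) * 1) := by
          simpa using sum_eulerian2_succ_mul m 1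
      _ = (2 * m + 1) * ∑ k ∈ range (m + 1), eulerian2 m k := by
          rw [mul_sum]
          refine sum_congr rfl fun k hk => ?_
          rw [mem_range] at hk
          rw [mul_comm, mul_one, mul_one, (by omega : k + 1 + (2 * m - k) = 2 * m + 1)]
      _ = (2 * (m + 1) - 1).doubleFactorial := by
          rw [ih, (by omega : 2 * (m + 1) - 1 = 2 * m + 1), Nat.doubleFactorial_add_one]

theorem add_one_mul_choose_add_sub_mul_choose {j r : ℕ} (N : ℕ) (hj : j ≤ r) :
    (j + 1) * N.choose (r + 1) + (r - j) * (N + 1).choose (r + 1) = (N - j) * N.choose r := by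
  rcases le_or_gt r N with hr | hr
  · have hsub : N - j = (N - r) + (r - j) := by omega
    have hj' : j + 1 + (r - j) = r + 1 := by omega
    rw [Nat.choose_succ_succ', hsub]
    linear_combination (N.choose (r + 1)) * hj' + Nat.choose_succ_right_eq N r
  · simp [Nat.choose_eq_zero_of_lt hr, Nat.choose_eq_zero_of_lt (by omega : N < r + 1),
      Nat.choose_eq_zero_of_lt (by omega : N + 1 < r + 1)]

/-- The polynomial of degree `2m` of Concrete Mathematics (6.44), interpolating
`n ↦ stirling1 n (n - m)` on `n ≥ m`. -/
def stirling1Poly (m x : ℕ) : ℕ :=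
  ∑ k ∈ range (m + 1), eulerian2 m k * (x + k).choose (2 * m)

theorem stirling1Poly_eq_zero {m n : ℕ} (hm : 0 < m) (hn : n ≤ m) : stirling1Poly m n = 0 := by
  refine sum_eq_zero fun k hk => ?_
  rcases (mem_range_succ_iff.mp hk).lt_or_eq with hk | rfl
  · rw [Nat.choose_eq_zero_of_lt (by omega), mul_zero]
  · obtain ⟨k, rfl⟩ := Nat.exists_eq_add_one_of_ne_zero hm.ne'
    rw [eulerian2_succ_self, zero_mul]

theorem stirling1Poly_succ (m n : ℕ) :
    stirling1Poly (m + 1) (n + 1) = stirling1Poly (m + 1) n + n * stirling1Poly m n := by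
  have hpascal : stirling1Poly (m + 1) (n + 1) = stirling1Poly (m + 1) n +
      ∑ k ∈ range (m + 2), eulerian2 (m + 1) k * (n + k).choose (2 * m + 1) := by
    rw [stirling1Poly, stirling1Poly, ← sum_add_distrib]
    refine sum_congr rfl fun k _ => ?_
    rw [add_right_comm, (by ring : 2 * (m + 1) = 2 * m + 1 + 1), Nat.choose_succ_succ', mul_add,
      add_comm]
  rw [hpascal, sum_eulerian2_succ_mul]
  congr 1
  rw [stirling1Poly, mul_sum]
  refine sum_congr rfl fun k hk => ?_
  rw [← add_assoc, add_one_mul_choose_add_sub_mul_choose _ (by grind), Nat.add_sub_cancel]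
  ring

theorem stirlingFirst_sub_eq_stirling1Poly {m n : ℕ} (h : m ≤ n) :
    Nat.stirlingFirst n (n - m) = stirling1Poly m n := by
  induction n generalizing m with
  | zero => obtain rfl := Nat.le_zero.mp h; rfl
  | succ n ih =>
    rcases m with _ | m
    · simp [stirling1Poly, eulerian2, Nat.stirlingFirst_self]
    rcases h.eq_or_lt with h | h
    · obtain rfl : m = n := by omega
      rw [Nat.sub_self, Nat.stirlingFirst_succ_zero, stirling1Poly_eq_zero m.succ_pos le_rfl]
    rw [(by omega : n + 1 - (m + 1) = n - (m + 1) + 1), Nat.stirlingFirst_succ_succ,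
      (by omega : n - (m + 1) + 1 = n - m), ih (by omega), ih (by omega), stirling1Poly_succ,
      add_comm]

theorem fwdDiff_iter_stirling1Poly (m : ℕ) :
    (fwdDiff 1)^[2 * m] (fun x ↦ (stirling1Poly m x : ℤ)) 0 = (2 * m - 1).doubleFactorial := by
  have hchoose : (fwdDiff 1)^[2 * m] (fun x : ℕ ↦ (x.choose (2 * m) : ℤ)) = fun _ ↦ 1 := by
    simpa using fwdDiff_iter_choose 0 (2 * m)
  have hterm (k : ℕ) : (fwdDiff 1)^[2 * m] (fun x ↦ ((x + k).choose (2 * m) : ℤ)) 0 = 1 := by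
    rw [fwdDiff_iter_comp_add 1 (fun x : ℕ ↦ (x.choose (2 * m) : ℤ)), hchoose]
  have hsum : (fun x ↦ (stirling1Poly m x : ℤ)) =
      ∑ k ∈ range (m + 1), (eulerian2 m k : ℤ) • fun x ↦ ((x + k).choose (2 * m) : ℤ) := by
    ext x
    simp [stirling1Poly]
  rw [hsum, fwdDiff_iter_finsetSum, Finset.sum_apply, ← sum_eulerian2, Nat.cast_sum]
  simp only [fwdDiff_iter_const_smul, Pi.smul_apply, hterm, smul_eq_mul, mul_one]

theorem neg_one_pow_two_mul_sub {R : Type*} [Ring R] {m k : ℕ} (hk : k ≤ 2 * m) :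
    (-1 : R) ^ (2 * m - k) = (-1) ^ k := by
  rw [neg_one_pow_eq_pow_mod_two, neg_one_pow_eq_pow_mod_two (R := R) k]
  congr 1
  omega

theorem stmt1_general (m : ℕ) :
    ∑ ℓ ∈ Finset.Icc m (2 * m),
      (-1 : ℤ) ^ ℓ * (Nat.choose (2 * m) ℓ : ℤ) * (stirling1 ℓ (ℓ - m) : ℤ) =
      (Nat.doubleFactorial (2 * m - 1) : ℤ) := by
  rw [← fwdDiff_iter_stirling1Poly, fwdDiff_iter_eq_sum_shift,
    ← sum_subset (fun ℓ hℓ ↦ mem_range_succ_iff.mpr (mem_Icc.mp hℓ).2)]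
  · refine sum_congr rfl fun ℓ hℓ ↦ ?_
    obtain ⟨hmℓ, hℓm⟩ := mem_Icc.mp hℓ
    rw [stirling1_eq_stirlingFirst, stirlingFirst_sub_eq_stirling1Poly hmℓ,
      neg_one_pow_two_mul_sub hℓm, smul_eq_mul, smul_eq_mul, mul_one, zero_add]
  · intro k hk hk'
    have hkm : k < m := by
      rw [mem_range] at hk
      rw [mem_Icc] at hk'
      omega
    rw [smul_eq_mul, smul_eq_mul, mul_one, zero_add, stirling1Poly_eq_zero (by omega) hkm.le,
      Nat.cast_zero, mul_zero]

theorem stmt1 (m : ℕ) (hm : 0 < m) :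
    ∑ ℓ ∈ Finset.Icc m (2 * m),
      (-1 : ℤ) ^ ℓ * (Nat.choose (2 * m) ℓ : ℤ) * (stirling1 ℓ (ℓ - m) : ℤ) =
      (Nat.doubleFactorial (2 * m - 1) : ℤ) :=
  stmt1_general m
end
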